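/- Let m ≥ 3, let A be a semi-symmetric strong M-tensor of order m and dimension n, let b ∈ ℝⁿ with b ≥ 0, I₊ = {i : b_i > 0} nonempty, I₀ = {i : b_i = 0}, and suppose for every i ∈ I₀ there exist indices i₂,…,i_m ∈ I₊ with a_{i i₂…i_m} ≠ 0. Let 0 < ε′ < ε < 1. Then the set F̄_{ε,ε′} is bounded away from zero: there exists δ > 0 such that y_i ≥ δ for every y ∈ F̄_{ε,ε′} and every i ∈ {1,…,n}. -/

import Mathlib

/-!
The Jacobian `M = f'(y)` is a Z-matrix, and Euler's identity for the degree-one homogeneous map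
`y ↦ A (y^{[1/(m-1)]})^{m-1}` reads `M y = A (y^{[1/(m-1)]})^{m-1}`; moreover each component of
that map is at most `s y_i`, where `s` bounds the diagonal of `A`. On `I₊` this already gives
`ε b_i ≤ s y_i`. On `I₀`, the block `M_{I₊I₊}` maps `y_{I₊} > 0` to a vector `≥ ε b_{I₊} > 0`, so it
is monotone and `y_{I₊} ≥ ε M_{I₊I₊}⁻¹ b_{I₊}`. Feeding this into the defining inequality of `F̄²`
gives `(ε - ε') (A y^{[1/(m-1)]})_i ≥ -ε' s y_i`, whereas a negative entry `a_{i i₂…i_m}` with all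
`i_j ∈ I₊` gives `(A y^{[1/(m-1)]})_i ≤ s y_i - c` with `c > 0` depending only on `ε b / s`.
Hence `y_i ≥ (ε - ε') c / (ε s)`.
-/

open Finset Matrix Filter Topology

noncomputable section

/-- `(A x^{m-1})_i`: action of an `m`th-order `n`-dimensional tensor, stored with its first
index separated and `q = m-1` trailing indices:
`(A x^{m-1})_i = ∑_{i₂,…,i_m} a_{i i₂…i_m} x_{i₂}⋯x_{i_m}`. -/
def tApp {n q : ℕ} (A : Fin n → (Fin q → Fin n) → ℝ) (x : Fin n → ℝ) (i : Fin n) : ℝ :=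
  ∑ g : Fin q → Fin n, A i g * ∏ j, x (g j)

/-- Complex version of `tApp` (for eigenvalues). -/
def tAppC {n q : ℕ} (A : Fin n → (Fin q → Fin n) → ℝ) (x : Fin n → ℂ) (i : Fin n) : ℂ :=
  ∑ g : Fin q → Fin n, (A i g : ℂ) * ∏ j, x (g j)

/-- The identity tensor: entry `1` when all indices coincide, `0` otherwise. -/
def identT (n q : ℕ) : Fin n → (Fin q → Fin n) → ℝ :=
  fun i g => if ∀ j, g j = i then 1 else 0

/-- `lam ∈ ℂ` is an eigenvalue of the tensor `B`: there is a nonzero `x ∈ ℂⁿ` with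
`(B x^{m-1})_i = lam * x_i^{m-1}` for all `i`. -/
def IsTensorEigenvalue {n q : ℕ} (B : Fin n → (Fin q → Fin n) → ℝ) (lam : ℂ) : Prop :=
  ∃ x : Fin n → ℂ, x ≠ 0 ∧ ∀ i, tAppC B x i = lam * x i ^ q

/-- Semi-symmetry: the entries `a_{i i₂…i_m}` are invariant under permutations of `i₂,…,i_m`. -/
def IsSemiSymmetric {n q : ℕ} (A : Fin n → (Fin q → Fin n) → ℝ) : Prop :=
  ∀ (i : Fin n) (g : Fin q → Fin n) (σ : Equiv.Perm (Fin q)), A i (g ∘ σ) = A i g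

/-- Z-tensor: all off-diagonal entries are nonpositive. -/
def IsZTensor {n q : ℕ} (A : Fin n → (Fin q → Fin n) → ℝ) : Prop :=
  ∀ (i : Fin n) (g : Fin q → Fin n), ¬(∀ j, g j = i) → A i g ≤ 0

/-- Strong (nonsingular) M-tensor: `A = s·I − B` with `B ≥ 0` and `s > ρ(B)`,
i.e. `|λ| < s` for every eigenvalue `λ` of `B`. -/
def IsStrongMTensor {n q : ℕ} (A : Fin n → (Fin q → Fin n) → ℝ) : Prop :=
  ∃ (s : ℝ) (B : Fin n → (Fin q → Fin n) → ℝ),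
    (∀ i g, 0 ≤ B i g) ∧ (∀ i g, A i g = s * identT n q i g - B i g) ∧
    ∀ lam : ℂ, IsTensorEigenvalue B lam → ‖lam‖ < s

/-- Componentwise power `y^{[α]}`. -/
def cPow {n : ℕ} (y : Fin n → ℝ) (α : ℝ) : Fin n → ℝ := fun i => y i ^ α

/-- Euclidean norm on `Fin n → ℝ`. -/
def enorm2 {n : ℕ} (x : Fin n → ℝ) : ℝ := Real.sqrt (∑ i, x i ^ 2)

/-- The Jacobian matrix of a map `f : ℝⁿ → ℝⁿ` at `y`. -/
def jacM {n : ℕ} (f : (Fin n → ℝ) → Fin n → ℝ) (y : Fin n → ℝ) :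
    Matrix (Fin n) (Fin n) ℝ :=
  fun i j => fderiv ℝ (fun z => f z i) y (Pi.single j 1)

/-- `f(y) = A (y^{[1/(m-1)]})^{m-1} − b`, with `q = m−1`. -/
def fres {n q : ℕ} (A : Fin n → (Fin q → Fin n) → ℝ) (b : Fin n → ℝ)
    (y : Fin n → ℝ) : Fin n → ℝ :=
  fun i => tApp A (cPow y (1 / (q : ℝ))) i - b i

/-- Nonsingular M-matrix: nonpositive off-diagonal entries and `M = s·1 − N` with
`N ≥ 0` entrywise and `s` larger than the spectral radius of `N`. -/
def IsNonsingularMMatrix {k : Type} [Fintype k] [DecidableEq k] (M : Matrix k k ℝ) : Prop :=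
  (∀ i j, i ≠ j → M i j ≤ 0) ∧
  ∃ (s : ℝ) (N : Matrix k k ℝ), (∀ i j, 0 ≤ N i j) ∧
    M = s • (1 : Matrix k k ℝ) - N ∧
    ∀ μ ∈ spectrum ℂ (N.map (fun t : ℝ => (t : ℂ))), ‖μ‖ < s

/-- The feasible set `F_ε = {y > 0 : A (y^{[1/(m-1)]})^{m-1} ≥ ε b}`. -/
def FSet {n q : ℕ} (A : Fin n → (Fin q → Fin n) → ℝ) (b : Fin n → ℝ) (ε : ℝ) :
    Set (Fin n → ℝ) :=
  {y | (∀ i, 0 < y i) ∧ ∀ i, ε * b i ≤ tApp A (cPow y (1 / (q : ℝ))) i}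

/-- Acceptance of the trial steplength `t` in the line search: feasibility and
`‖f(y + t d)‖² ≤ (1 − 2σt)‖f(y)‖²`. -/
def StepOK {n q : ℕ} (A : Fin n → (Fin q → Fin n) → ℝ) (b : Fin n → ℝ)
    (Fb : Set (Fin n → ℝ)) (σ : ℝ) (y d : Fin n → ℝ) (t : ℝ) : Prop :=
  y + t • d ∈ Fb ∧
    enorm2 (fres A b (y + t • d)) ^ 2 ≤ (1 - 2 * σ * t) * enorm2 (fres A b y) ^ 2

/-- Newton's method (Algorithm 2.4 resp. 3.4) with feasible set `Fb`, never terminating: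
`y₀ ∈ Fb`; for every `k`, `f(y_k) ≠ 0`, `d_k` is the unique solution of
`f'(y_k) d = −f(y_k)`, `α_k = ρ^{i_k}` with `i_k` the least acceptable exponent, and
`y_{k+1} = y_k + α_k d_k`. -/
def NewtonIter {n q : ℕ} (A : Fin n → (Fin q → Fin n) → ℝ) (b : Fin n → ℝ)
    (Fb : Set (Fin n → ℝ)) (σ ρ : ℝ) (y d : ℕ → Fin n → ℝ) (α : ℕ → ℝ) : Prop :=
  y 0 ∈ Fb ∧ ∀ k : ℕ,
    fres A b (y k) ≠ 0 ∧
    jacM (fres A b) (y k) *ᵥ d k = -fres A b (y k) ∧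
    (∀ d', jacM (fres A b) (y k) *ᵥ d' = -fres A b (y k) → d' = d k) ∧
    (∃ ik : ℕ, α k = ρ ^ ik ∧ StepOK A b Fb σ (y k) (d k) (ρ ^ ik) ∧
      ∀ i < ik, ¬StepOK A b Fb σ (y k) (d k) (ρ ^ i)) ∧
    y (k + 1) = y k + α k • d k

/-- Submatrix of `M` with rows indexed by `{i // P i}` and columns by `{i // Q i}`. -/
def subMat {n : ℕ} (M : Matrix (Fin n) (Fin n) ℝ) (P Q : Fin n → Prop) :
    Matrix {i // P i} {i // Q i} ℝ :=
  fun i j => M i.1 j.1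

/-- `b` restricted to the index set `I₊ = {i : b_i > 0}`. -/
def bPlus {n : ℕ} (b : Fin n → ℝ) : {i : Fin n // 0 < b i} → ℝ := fun i => b i.1

/-- `F̄¹_ε = {y > 0 : (A(y^{[1/(m−1)]})^{m−1})_i ≥ ε b_i for all i ∈ I₊}`. -/
def FBar1 {n q : ℕ} (A : Fin n → (Fin q → Fin n) → ℝ) (b : Fin n → ℝ) (ε : ℝ) :
    Set (Fin n → ℝ) :=
  {y | (∀ i, 0 < y i) ∧ ∀ i, 0 < b i → ε * b i ≤ tApp A (cPow y (1 / (q : ℝ))) i}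

/-- `F̄²_{ε'} = {y > 0 : f'(y)_{I₊I₊} invertible and
`(A(y^{[1/(m−1)]})^{m−1})_{I₀} ≥ ε' f'(y)_{I₀I₊} f'(y)_{I₊I₊}⁻¹ b_{I₊}` componentwise}. -/
def FBar2 {n q : ℕ} (A : Fin n → (Fin q → Fin n) → ℝ) (b : Fin n → ℝ) (ε' : ℝ) :
    Set (Fin n → ℝ) :=
  {y | (∀ i, 0 < y i) ∧
    IsUnit (subMat (jacM (fres A b) y) (fun i => 0 < b i) (fun i => 0 < b i)) ∧
    ∀ i : {i : Fin n // b i = 0},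
      ε' * (subMat (jacM (fres A b) y) (fun i => b i = 0) (fun i => 0 < b i) *ᵥ
        ((subMat (jacM (fres A b) y) (fun i => 0 < b i) (fun i => 0 < b i))⁻¹ *ᵥ bPlus b)) i
        ≤ tApp A (cPow y (1 / (q : ℝ))) i.1}

/-- `F̄_{ε,ε'} = F̄¹_ε ∩ F̄²_{ε'}`. -/
def FBar {n q : ℕ} (A : Fin n → (Fin q → Fin n) → ℝ) (b : Fin n → ℝ) (ε ε' : ℝ) :
    Set (Fin n → ℝ) :=
  FBar1 A b ε ∩ FBar2 A b ε'

/-- For every `i ∈ I₀` there exist indices `i₂,…,i_m ∈ I₊` with `a_{i i₂…i_m} ≠ 0`. -/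
def I0Hyp {n q : ℕ} (A : Fin n → (Fin q → Fin n) → ℝ) (b : Fin n → ℝ) : Prop :=
  ∀ i : Fin n, b i = 0 → ∃ g : Fin q → Fin n, (∀ j, 0 < b (g j)) ∧ A i g ≠ 0

theorem hasFDerivAt_prod_rpow {ι κ : Type*} [Fintype ι] [Fintype κ] {y : κ → ℝ}
    (hy : ∀ k, 0 < y k) (g : ι → κ) (r : ℝ) :
    HasFDerivAt (fun z : κ → ℝ => ∏ j, z (g j) ^ r)
      (∑ j, (r * (∏ l, y (g l) ^ r) / y (g j)) •
        ContinuousLinearMap.proj (R := ℝ) (φ := fun _ : κ => ℝ) (g j)) y := by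
  classical
  have hfac : ∀ j ∈ (univ : Finset ι), HasFDerivAt (fun z : κ → ℝ => z (g j) ^ r)
      ((r * y (g j) ^ (r - 1)) • ContinuousLinearMap.proj (R := ℝ) (φ := fun _ : κ => ℝ) (g j)) y :=
    fun j _ => (Real.hasDerivAt_rpow_const (Or.inl (hy (g j)).ne')).comp_hasFDerivAt
      (f := fun z : κ → ℝ => z (g j)) y (hasFDerivAt_apply (g j) y)
  refine (HasFDerivAt.finsetProd (u := univ) (g := fun j (z : κ → ℝ) => z (g j) ^ r)
    hfac).congr_fderiv ?_
  refine Finset.sum_congr rfl fun j _ => ?_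
  rw [smul_smul, Real.rpow_sub_one (hy (g j)).ne', ← Finset.mul_prod_erase _ _ (mem_univ j)]
  congr 1
  field_simp

theorem fderiv_prod_rpow_apply_single {ι κ : Type*} [Fintype ι] [Fintype κ] [DecidableEq κ]
    {y : κ → ℝ} (hy : ∀ k, 0 < y k) (g : ι → κ) (r : ℝ) (k : κ) :
    fderiv ℝ (fun z : κ → ℝ => ∏ j, z (g j) ^ r) y (Pi.single k 1) =
      #{j | g j = k} * (r * (∏ l, y (g l) ^ r) / y k) := by
  rw [(hasFDerivAt_prod_rpow hy g r).fderiv]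
  simp only [Pi.single_apply, ContinuousLinearMap.proj_apply, smul_eq_mul, mul_ite, mul_one,
    mul_zero, _root_.sum_apply, _root_.smul_apply, sum_ite, sum_const_zero, add_zero]
  rw [sum_congr rfl fun j hj => by rw [(mem_filter.1 hj).2], sum_const, nsmul_eq_mul]

section Jacobian

variable {n q : ℕ}

theorem jacM_fres_mul_self (A : Fin n → (Fin q → Fin n) → ℝ) (b : Fin n → ℝ)
    {y : Fin n → ℝ} (hy : ∀ k, 0 < y k) (i k : Fin n) :
    jacM (fres A b) y i k * y k =
      (∑ g, A i g * (#{j | g j = k} * ∏ l, cPow y (1 / q) (g l))) / q := by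
  have hF : HasFDerivAt (fun z => fres A b z i)
      (∑ g, A i g • fderiv ℝ (fun z : Fin n → ℝ => ∏ j, z (g j) ^ (1 / (q : ℝ))) y) y :=
    (HasFDerivAt.fun_sum fun g _ =>
      (hasFDerivAt_prod_rpow hy g _).differentiableAt.hasFDerivAt.const_mul (A i g)).sub_const (b i)
  rw [jacM, hF.fderiv]
  simp only [_root_.sum_apply, _root_.smul_apply, smul_eq_mul,
    fderiv_prod_rpow_apply_single hy, sum_mul, sum_div, cPow]
  refine sum_congr rfl fun g _ => ?_
  field_simp [(hy k).ne']

/-- Euler's identity for the degree-one homogeneous map `y ↦ A (y^{[1/q]})^q`. -/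
theorem sum_jacM_fres_mul_self (hq : q ≠ 0) (A : Fin n → (Fin q → Fin n) → ℝ)
    (b : Fin n → ℝ) {y : Fin n → ℝ} (hy : ∀ k, 0 < y k) (i : Fin n) :
    ∑ k, jacM (fres A b) y i k * y k = tApp A (cPow y (1 / q)) i := by
  have hfiber : ∀ g : Fin q → Fin n, ∑ k, (#{j | g j = k} : ℝ) = q := fun g => by
    rw [← Nat.cast_sum, ← card_eq_sum_card_fiberwise (fun j _ => mem_univ _), card_univ,
      Fintype.card_fin]
  simp only [jacM_fres_mul_self A b hy, ← sum_div, mul_left_comm (A _ _)]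
  rw [sum_comm, tApp]
  simp only [← mul_sum, ← sum_mul, hfiber]
  rw [mul_div_cancel_left₀ _ (Nat.cast_ne_zero.2 hq)]

end Jacobian

section ZTensor

variable {n q : ℕ} {A : Fin n → (Fin q → Fin n) → ℝ}

theorem IsStrongMTensor.isZTensor (hA : IsStrongMTensor A) : IsZTensor A := by
  obtain ⟨s, B, hB, hAB, -⟩ := hA
  intro i g hg
  rw [hAB, identT, if_neg hg]
  linarith [hB i g]

theorem IsStrongMTensor.exists_pos_diag_le (hA : IsStrongMTensor A) :
    ∃ s, 0 < s ∧ ∀ i, A i (fun _ => i) ≤ s := by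
  obtain ⟨s, B, hB, hAB, -⟩ := hA
  refine ⟨max s 1, by positivity, fun i => ?_⟩
  rw [hAB, identT, if_pos fun _ => rfl]
  linarith [hB i fun _ => i, le_max_left s 1]

theorem IsZTensor.sum_mul_le (hZ : IsZTensor A) {φ : (Fin q → Fin n) → ℝ} (hφ : ∀ g, 0 ≤ φ g)
    {i : Fin n} {S : Finset (Fin q → Fin n)} (hS : (fun _ => i) ∈ S) :
    ∑ g, A i g * φ g ≤ ∑ g ∈ S, A i g * φ g :=
  sum_le_sum_of_subset_of_nonpos' (subset_univ S) fun g _ hg =>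
    mul_nonpos_of_nonpos_of_nonneg (hZ i g fun hgi => hg (by rwa [funext hgi])) (hφ g)

theorem prod_cPow_const (hq : q ≠ 0) {y : Fin n → ℝ} {i : Fin n} (hy : 0 ≤ y i) :
    ∏ _l : Fin q, cPow y (1 / q) i = y i := by
  rw [prod_const, card_univ, Fintype.card_fin, cPow, one_div, Real.rpow_inv_natCast_pow hy hq]

theorem prod_cPow_nonneg {y : Fin n → ℝ} (hy : ∀ k, 0 < y k) (r : ℝ) (g : Fin q → Fin n) :
    0 ≤ ∏ l, cPow y r (g l) :=
  prod_nonneg fun _ _ => Real.rpow_nonneg (hy _).le r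

theorem tApp_cPow_le_diag_mul (hq : q ≠ 0) (hZ : IsZTensor A) {y : Fin n → ℝ}
    (hy : ∀ k, 0 < y k) (i : Fin n) :
    tApp A (cPow y (1 / q)) i ≤ A i (fun _ => i) * y i :=
  calc tApp A (cPow y (1 / q)) i ≤ ∑ g ∈ {fun _ => i}, A i g * ∏ l, cPow y (1 / q) (g l) :=
        hZ.sum_mul_le (prod_cPow_nonneg hy _) (mem_singleton_self _)
    _ = A i (fun _ => i) * y i := by rw [sum_singleton, prod_cPow_const hq (hy i).le]

theorem tApp_cPow_le_diag_mul_add (hq : q ≠ 0) (hZ : IsZTensor A) {y : Fin n → ℝ}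
    (hy : ∀ k, 0 < y k) {i : Fin n} {g : Fin q → Fin n} (hg : ¬∀ j, g j = i) :
    tApp A (cPow y (1 / q)) i ≤ A i (fun _ => i) * y i + A i g * ∏ l, cPow y (1 / q) (g l) := by
  have hne : (fun _ => i) ≠ g := fun h => hg fun j => by rw [← h]
  calc tApp A (cPow y (1 / q)) i ≤ ∑ g' ∈ {fun _ => i, g}, A i g' * ∏ l, cPow y (1 / q) (g' l) :=
        hZ.sum_mul_le (prod_cPow_nonneg hy _) (mem_insert_self _ _)
    _ = _ := by rw [sum_pair hne, prod_cPow_const hq (hy i).le]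

theorem jacM_fres_nonpos_of_ne (hZ : IsZTensor A) (b : Fin n → ℝ) {y : Fin n → ℝ}
    (hy : ∀ k, 0 < y k) {i k : Fin n} (hik : i ≠ k) : jacM (fres A b) y i k ≤ 0 := by
  refine nonpos_of_mul_nonpos_left ?_ (hy k)
  rw [jacM_fres_mul_self A b hy]
  refine div_nonpos_of_nonpos_of_nonneg ?_ q.cast_nonneg
  calc _ ≤ ∑ g ∈ {fun _ => i}, A i g * (#{j | g j = k} * ∏ l, cPow y (1 / q) (g l)) :=
        hZ.sum_mul_le (fun g => mul_nonneg (Nat.cast_nonneg _) (prod_cPow_nonneg hy _ g))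
          (mem_singleton_self _)
    _ = 0 := by simp [hik]

theorem jacM_fres_diag_mul_self_le (hq : q ≠ 0) (hZ : IsZTensor A) (b : Fin n → ℝ)
    {y : Fin n → ℝ} (hy : ∀ k, 0 < y k) (i : Fin n) :
    jacM (fres A b) y i i * y i ≤ A i (fun _ => i) * y i := by
  rw [jacM_fres_mul_self A b hy, div_le_iff₀ (by positivity)]
  calc _ ≤ ∑ g ∈ {fun _ => i}, A i g * (#{j | g j = i} * ∏ l, cPow y (1 / q) (g l)) :=
        hZ.sum_mul_le (fun g => mul_nonneg (Nat.cast_nonneg _) (prod_cPow_nonneg hy _ g))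
          (mem_singleton_self _)
    _ = _ := by
      simp only [sum_singleton, filter_true, card_univ, Fintype.card_fin,
        prod_cPow_const hq (hy i).le]
      ring

theorem tApp_cPow_le_sum_jacM_mul (hq : q ≠ 0) (hZ : IsZTensor A) (b : Fin n → ℝ)
    {y : Fin n → ℝ} (hy : ∀ k, 0 < y k) {i : Fin n} {S : Finset (Fin n)} (hS : i ∈ S) :
    tApp A (cPow y (1 / q)) i ≤ ∑ k ∈ S, jacM (fres A b) y i k * y k := by
  rw [← sum_jacM_fres_mul_self hq A b hy i]
  exact sum_le_sum_of_subset_of_nonpos' (subset_univ S) fun k _ hk =>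
    mul_nonpos_of_nonpos_of_nonneg (jacM_fres_nonpos_of_ne hZ b hy fun h => hk (h ▸ hS))
      (hy k).le

end ZTensor

namespace Matrix

variable {K : Type*} [Fintype K]

theorem nonneg_of_mulVec_nonneg {M : Matrix K K ℝ} (hM : ∀ i j, i ≠ j → M i j ≤ 0)
    {u : K → ℝ} (hu : ∀ i, 0 < u i) (hMu : ∀ i, 0 < (M *ᵥ u) i) {z : K → ℝ}
    (hz : ∀ i, 0 ≤ (M *ᵥ z) i) (i : K) : 0 ≤ z i := by
  by_contra! hzi
  -- `t u` touches `z` from below at `i₀`, so `M (z - t u)` is nonpositive there.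
  obtain ⟨i₀, -, hmin⟩ := exists_min_image univ (fun k => z k / u k) ⟨i, mem_univ i⟩
  set t := z i₀ / u i₀
  have ht : t < 0 := (hmin i (mem_univ i)).trans_lt (div_neg_of_neg_of_pos hzi (hu i))
  have hle : ∀ k, t * u k ≤ z k := fun k => (le_div_iff₀ (hu k)).1 (hmin k (mem_univ k))
  have heq : z i₀ - t * u i₀ = 0 := by rw [div_mul_cancel₀ _ (hu i₀).ne', sub_self]
  have key : (M *ᵥ (z - t • u)) i₀ ≤ 0 := by
    refine sum_nonpos fun k _ => ?_
    rcases eq_or_ne i₀ k with rfl | hk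
    · simp [heq]
    · exact mul_nonpos_of_nonpos_of_nonneg (hM _ _ hk) (by simpa using hle k)
  rw [mulVec_sub, mulVec_smul, Pi.sub_apply, Pi.smul_apply, smul_eq_mul] at key
  linarith [hz i₀, mul_neg_of_neg_of_pos ht (hMu i₀)]

theorem inv_mulVec_le [DecidableEq K] {M : Matrix K K ℝ} (hM : ∀ i j, i ≠ j → M i j ≤ 0)
    (hU : IsUnit M) {u c : K → ℝ} (hu : ∀ i, 0 < u i) (hc : ∀ i, 0 < c i)
    (hcu : ∀ i, c i ≤ (M *ᵥ u) i) (i : K) : (M⁻¹ *ᵥ c) i ≤ u i := by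
  have hinv : M *ᵥ (M⁻¹ *ᵥ c) = c := by
    rw [mulVec_mulVec, mul_nonsing_inv _ ((isUnit_iff_isUnit_det M).1 hU), one_mulVec]
  have := nonneg_of_mulVec_nonneg hM hu (fun j => (hc j).trans_le (hcu j))
    (z := u - M⁻¹ *ᵥ c) (fun j => by simpa [mulVec_sub, hinv] using hcu j) i
  simpa using this

end Matrix

theorem exists_pos_forall_le_apply {ι : Type*} [Finite ι] {S : Set (ι → ℝ)}
    (h : ∀ i, ∃ δ : ℝ, 0 < δ ∧ ∀ y ∈ S, δ ≤ y i) :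
    ∃ δ : ℝ, 0 < δ ∧ ∀ y ∈ S, ∀ i, δ ≤ y i := by
  choose δ hδ hle using h
  obtain ⟨x, hx, hx0⟩ := (((eventually_all.2 fun i => eventually_lt_nhds (hδ i)).filter_mono
    nhdsWithin_le_nhds).and (self_mem_nhdsWithin (s := Set.Ioi (0 : ℝ)))).exists
  exact ⟨x, hx0, fun y hy i => (hx i).le.trans (hle i y hy)⟩

section FeasibleSet

variable {n q : ℕ} {A : Fin n → (Fin q → Fin n) → ℝ} {b : Fin n → ℝ} {s ε ε' : ℝ}

theorem mul_le_mul_apply_of_mem_FBar1 (hq : q ≠ 0) (hZ : IsZTensor A)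
    (hs : ∀ i, A i (fun _ => i) ≤ s) {y : Fin n → ℝ} (hy : y ∈ FBar1 A b ε) {i : Fin n}
    (hi : 0 < b i) : ε * b i ≤ s * y i :=
  (hy.2 i hi).trans <| (tApp_cPow_le_diag_mul hq hZ hy.1 i).trans <|
    mul_le_mul_of_nonneg_right (hs i) (hy.1 i).le

theorem exists_pos_le_apply_of_pos (hq : q ≠ 0) (hZ : IsZTensor A) (hs0 : 0 < s)
    (hs : ∀ i, A i (fun _ => i) ≤ s) (hε : 0 < ε) {i : Fin n} (hi : 0 < b i) :
    ∃ δ : ℝ, 0 < δ ∧ ∀ y ∈ FBar1 A b ε, δ ≤ y i :=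
  ⟨ε * b i / s, by positivity, fun _ hy =>
    (div_le_iff₀' hs0).2 (mul_le_mul_apply_of_mem_FBar1 hq hZ hs hy hi)⟩

theorem smul_inv_jacM_le_of_mem_FBar1 (hq : q ≠ 0) (hZ : IsZTensor A) (hε : 0 < ε)
    {y : Fin n → ℝ} (hy : y ∈ FBar1 A b ε)
    (hU : IsUnit (subMat (jacM (fres A b) y) (fun i => 0 < b i) (fun i => 0 < b i)))
    (k : {i // 0 < b i}) :
    ε * ((subMat (jacM (fres A b) y) (fun i => 0 < b i) (fun i => 0 < b i))⁻¹ *ᵥ bPlus b) k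
      ≤ y k := by
  set M := subMat (jacM (fres A b) y) (fun i => 0 < b i) (fun i => 0 < b i)
  have hrow : ∀ k : {i // 0 < b i}, (ε • bPlus b) k ≤ (M *ᵥ fun l => y l) k :=
    fun k => (hy.2 k k.2).trans <|
      (tApp_cPow_le_sum_jacM_mul hq hZ b hy.1 (S := {i | 0 < b i}) (by simp [k.2])).trans_eq
        (sum_subtype (p := fun i => 0 < b i) _ (by simp) _)
  have := Matrix.inv_mulVec_le (M := M) (c := ε • bPlus b)
    (fun k l hkl => jacM_fres_nonpos_of_ne hZ b hy.1 (Subtype.coe_injective.ne hkl)) hU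
    (fun l => hy.1 l) (fun l => mul_pos hε l.2) hrow k
  rwa [mulVec_smul] at this

theorem tApp_cPow_le_add_sum_jacM_mul (hq : q ≠ 0) (hZ : IsZTensor A)
    (hs : ∀ i, A i (fun _ => i) ≤ s) {y : Fin n → ℝ} (hy : ∀ k, 0 < y k) {i : Fin n}
    (hi : ¬0 < b i) :
    tApp A (cPow y (1 / q)) i ≤ s * y i + ∑ k : {k // 0 < b k}, jacM (fres A b) y i k * y k := by
  have h := tApp_cPow_le_sum_jacM_mul hq hZ b hy (mem_insert_self i {k | 0 < b k})
  rw [sum_insert (by simpa using hi), sum_subtype (p := fun k => 0 < b k) _ (by simp)] at h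
  exact h.trans <| add_le_add_left ((jacM_fres_diag_mul_self_le hq hZ b hy i).trans <|
    mul_le_mul_of_nonneg_right (hs i) (hy i).le) _

theorem not_forall_eq_of_eq_zero (hq : q ≠ 0) {i : Fin n} (hi : b i = 0) {g : Fin q → Fin n}
    (hg : ∀ j, 0 < b (g j)) : ¬∀ j, g j = i := fun h => by
  simpa [h ⟨0, Nat.pos_of_ne_zero hq⟩, hi] using hg ⟨0, Nat.pos_of_ne_zero hq⟩

theorem mul_prod_le_mul_apply_of_mem_FBar (hq : q ≠ 0) (hZ : IsZTensor A) (hs0 : 0 < s)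
    (hs : ∀ i, A i (fun _ => i) ≤ s) (hε' : 0 < ε') (hεε' : ε' < ε) {y : Fin n → ℝ}
    (hy : y ∈ FBar A b ε ε') {i : Fin n} (hi : b i = 0) {g : Fin q → Fin n}
    (hg : ∀ j, 0 < b (g j)) :
    (ε - ε') * -A i g * ∏ l, (ε * b (g l) / s) ^ (1 / (q : ℝ)) ≤ ε * s * y i := by
  obtain ⟨hy1, -, hU, hF2⟩ := hy
  have hε : 0 < ε := hε'.trans hεε'
  have hgi := not_forall_eq_of_eq_zero hq hi hg
  set M := jacM (fres A b) y
  set v := (subMat M (fun i => 0 < b i) (fun i => 0 < b i))⁻¹ *ᵥ bPlus b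
  set t := tApp A (cPow y (1 / q)) i
  set X := ∑ k : {k // 0 < b k}, M i k * y k
  set w := ∑ k : {k // 0 < b k}, M i k * v k
  set P := ∏ l, (ε * b (g l) / s) ^ (1 / (q : ℝ))
  have hwt : ε' * w ≤ t := hF2 ⟨i, hi⟩
  have hXw : X ≤ ε * w := by
    rw [mul_sum]
    refine sum_le_sum fun k _ => ?_
    have hik : i ≠ k := fun h => (hi ▸ h ▸ k.2).false
    rw [mul_left_comm]
    exact mul_le_mul_of_nonpos_left (smul_inv_jacM_le_of_mem_FBar1 hq hZ hε hy1 hU k)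
      (jacM_fres_nonpos_of_ne hZ b hy1.1 hik)
  have htX : t ≤ s * y i + X := tApp_cPow_le_add_sum_jacM_mul hq hZ hs hy1.1 (by simp [hi])
  have hP : P ≤ ∏ l, cPow y (1 / q) (g l) :=
    prod_le_prod (fun l _ => by have := hg l; positivity) fun l _ =>
      Real.rpow_le_rpow (by have := hg l; positivity)
        ((div_le_iff₀' hs0).2 (mul_le_mul_apply_of_mem_FBar1 hq hZ hs hy1 (hg l))) (by positivity)
  have htP : t ≤ s * y i + A i g * P :=
    (tApp_cPow_le_diag_mul_add hq hZ hy1.1 hgi).trans <|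
      add_le_add (mul_le_mul_of_nonneg_right (hs i) (hy1.1 i).le)
        (mul_le_mul_of_nonpos_left hP (hZ i g hgi))
  linarith [mul_le_mul_of_nonneg_left htX hε'.le, mul_le_mul_of_nonneg_left hXw hε'.le,
    mul_le_mul_of_nonneg_left hwt hε.le, mul_le_mul_of_nonneg_left htP (sub_nonneg.2 hεε'.le)]

theorem exists_pos_le_apply_of_eq_zero (hq : q ≠ 0) (hZ : IsZTensor A) (hs0 : 0 < s)
    (hs : ∀ i, A i (fun _ => i) ≤ s) (hε' : 0 < ε') (hεε' : ε' < ε) {i : Fin n} (hi : b i = 0)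
    {g : Fin q → Fin n} (hg : ∀ j, 0 < b (g j)) (hAg : A i g ≠ 0) :
    ∃ δ : ℝ, 0 < δ ∧ ∀ y ∈ FBar A b ε ε', δ ≤ y i := by
  have hε : 0 < ε := hε'.trans hεε'
  have hAg' : 0 < -A i g := neg_pos.2 <| (hZ i g (not_forall_eq_of_eq_zero hq hi hg)).lt_of_ne hAg
  have hP : 0 < ∏ l, (ε * b (g l) / s) ^ (1 / (q : ℝ)) :=
    prod_pos fun l _ => by have := hg l; positivity
  have hεε'' : 0 < ε - ε' := sub_pos.2 hεε'
  exact ⟨(ε - ε') * -A i g * (∏ l, (ε * b (g l) / s) ^ (1 / (q : ℝ))) / (ε * s), by positivity,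
    fun y hy => (div_le_iff₀' (by positivity)).2
      (mul_prod_le_mul_apply_of_mem_FBar hq hZ hs0 hs hε' hεε' hy hi hg)⟩

end FeasibleSet

theorem FBar_bounded_away_from_zero_general {m n : ℕ} (hm : 3 ≤ m)
    (A : Fin n → (Fin (m - 1) → Fin n) → ℝ)
    (hM : IsStrongMTensor A)
    (b : Fin n → ℝ) (hb : ∀ i, 0 ≤ b i) (hI0 : I0Hyp A b)
    (ε ε' : ℝ) (h1 : 0 < ε') (h2 : ε' < ε) :
    ∃ δ : ℝ, 0 < δ ∧ ∀ y ∈ FBar A b ε ε', ∀ i, δ ≤ y i := by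
  have hq : m - 1 ≠ 0 := by omega
  have hZ := hM.isZTensor
  obtain ⟨s, hs0, hs⟩ := hM.exists_pos_diag_le
  refine exists_pos_forall_le_apply fun i => ?_
  rcases (hb i).lt_or_eq with hi | hi
  · obtain ⟨δ, hδ, hle⟩ := exists_pos_le_apply_of_pos hq hZ hs0 hs (h1.trans h2) hi
    exact ⟨δ, hδ, fun y hy => hle y hy.1⟩
  · obtain ⟨g, hg, hAg⟩ := hI0 i hi.symm
    exact exists_pos_le_apply_of_eq_zero hq hZ hs0 hs h1 h2 hi.symm hg hAg

theorem FBar_bounded_away_from_zero {m n : ℕ} (hm : 3 ≤ m)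
    (A : Fin n → (Fin (m - 1) → Fin n) → ℝ)
    (hsym : IsSemiSymmetric A) (hM : IsStrongMTensor A)
    (b : Fin n → ℝ) (hb : ∀ i, 0 ≤ b i) (hbp : ∃ i, 0 < b i) (hI0 : I0Hyp A b)
    (ε ε' : ℝ) (h1 : 0 < ε') (h2 : ε' < ε) (h3 : ε < 1) :
    ∃ δ : ℝ, 0 < δ ∧ ∀ y ∈ FBar A b ε ε', ∀ i, δ ≤ y i :=
  FBar_bounded_away_from_zero_general hm A hM b hb hI0 ε ε' h1 h2
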